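/- The 4×4 matrices P_(12), P_(34), Q₁₂, Q₃₄ satisfy: [P_(12), P_(34)] = 0; [P_(12), Q₁₂] = [P_(12), Q₃₄] = [P_(34), Q₁₂] = [P_(34), Q₃₄] = 0; and [Q₁₂, Q₃₄] = 2(Q₁₂ − Q₃₄) + 2(P_(12) − P_(34)). Consequently these four matrices are linearly independent over ℂ and their complex linear span is a 4-dimensional Lie subalgebra of 𝔏_GM (Model 4.4b). -/

import Mathlib

open Matrix

noncomputable section

/-- The elementary rate matrix `L_ij`: entry 1 at `(i,j)`, entry −1 at `(j,j)`, 0 elsewhere. -/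
def Lmat (i j : Fin 4) : Matrix (Fin 4) (Fin 4) ℂ :=
  Matrix.single i j 1 - Matrix.single j j 1

/-- `𝔏_GM`: the 4×4 complex matrices each of whose columns sums to zero. -/
def LGMset : Set (Matrix (Fin 4) (Fin 4) ℂ) :=
  {Q | ∀ j, ∑ i, Q i j = 0}

/-- The permutation matrix `K_σ`, with entry 1 in position `(σ j, j)` for each `j`. -/
def Kmat (σ : Equiv.Perm (Fin 4)) : Matrix (Fin 4) (Fin 4) ℂ :=
  Matrix.of fun i j => if i = σ j then 1 else 0

/-- The permutation vector `P_σ := K_σ − I`. -/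
def Pmat (σ : Equiv.Perm (Fin 4)) : Matrix (Fin 4) (Fin 4) ℂ :=
  Kmat σ - 1

/-- The 4-cycle (1324) (on `{1,2,3,4}`, i.e. `0 ↦ 2 ↦ 1 ↦ 3 ↦ 0` on `Fin 4`). -/
def c1324 : Equiv.Perm (Fin 4) := Equiv.swap 0 3 * Equiv.swap 0 1 * Equiv.swap 0 2

/-- The 4-cycle (1423) (on `{1,2,3,4}`, i.e. `0 ↦ 3 ↦ 1 ↦ 2 ↦ 0` on `Fin 4`). -/
def c1423 : Equiv.Perm (Fin 4) := Equiv.swap 0 2 * Equiv.swap 0 1 * Equiv.swap 0 3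

/-- The group 𝒢 = {e, (12), (34), (12)(34), (13)(24), (14)(23), (1324), (1423)},
presented as a list of its eight elements. -/
def Glist : List (Equiv.Perm (Fin 4)) :=
  [1, Equiv.swap 0 1, Equiv.swap 2 3, Equiv.swap 0 1 * Equiv.swap 2 3,
   Equiv.swap 0 2 * Equiv.swap 1 3, Equiv.swap 0 3 * Equiv.swap 1 2, c1324, c1423]

/-- The cherry vector `Q₁₂ = L₁₃ + L₁₄ + L₂₃ + L₂₄` (1-based indices). -/
def Qc12 : Matrix (Fin 4) (Fin 4) ℂ := Lmat 0 2 + Lmat 0 3 + Lmat 1 2 + Lmat 1 3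

/-- The cherry vector `Q₃₄ = L₃₁ + L₃₂ + L₄₁ + L₄₂` (1-based indices). -/
def Qc34 : Matrix (Fin 4) (Fin 4) ℂ := Lmat 2 0 + Lmat 2 1 + Lmat 3 0 + Lmat 3 1

/-! The relabelling identity `K_σ L_ij = L_σ(i)σ(j) K_σ` shows that `K_(12)` and `K_(34)`
commute with both cherry vectors, since each swap only permutes their four summands; as the two
swaps are disjoint, `P_(12)` and `P_(34)` are central in the span. The one remaining bracket
`[Q₁₂, Q₃₄]` is a direct computation, and since the commutator is bilinear, closure of the span
reduces to the generators. -/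

theorem Kmat_mul (σ τ : Equiv.Perm (Fin 4)) : Kmat σ * Kmat τ = Kmat (σ * τ) := by
  ext a b
  simp [Kmat, mul_apply]
  rfl -- the two sides differ only in their `Decidable` instances

theorem Kmat_mul_single (σ : Equiv.Perm (Fin 4)) (i j : Fin 4) (c : ℂ) :
    Kmat σ * single i j c = single (σ i) j c := by
  ext a b
  simp only [Kmat, mul_apply, single_apply, of_apply]
  simp [ite_and, eq_comm (a := a), and_comm]

theorem single_mul_Kmat (σ : Equiv.Perm (Fin 4)) (i j : Fin 4) (c : ℂ) :
    single i j c * Kmat σ = single i (σ.symm j) c := by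
  ext a b
  simp [Kmat, mul_apply, single_apply, Equiv.symm_apply_eq, eq_comm (a := j)]

theorem Kmat_mul_Lmat (σ : Equiv.Perm (Fin 4)) (i j : Fin 4) :
    Kmat σ * Lmat i j = Lmat (σ i) (σ j) * Kmat σ := by
  simp [Lmat, mul_sub, sub_mul, Kmat_mul_single, single_mul_Kmat]

theorem commute_Kmat_of_commute {σ τ : Equiv.Perm (Fin 4)} (h : Commute σ τ) :
    Commute (Kmat σ) (Kmat τ) := by
  rw [Commute, SemiconjBy, Kmat_mul, Kmat_mul, h.eq]

theorem commute_Kmat_Qc12 {σ : Equiv.Perm (Fin 4)}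
    (hσ : σ = Equiv.swap 0 1 ∨ σ = Equiv.swap 2 3) : Commute (Kmat σ) Qc12 := by
  rcases hσ with rfl | rfl <;>
    simp [Commute, SemiconjBy, Qc12, mul_add, add_mul, Kmat_mul_Lmat,
      Equiv.swap_apply_of_ne_of_ne] <;> abel

theorem commute_Kmat_Qc34 {σ : Equiv.Perm (Fin 4)}
    (hσ : σ = Equiv.swap 0 1 ∨ σ = Equiv.swap 2 3) : Commute (Kmat σ) Qc34 := by
  rcases hσ with rfl | rfl <;>
    simp [Commute, SemiconjBy, Qc34, mul_add, add_mul, Kmat_mul_Lmat,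
      Equiv.swap_apply_of_ne_of_ne] <;> abel

theorem Commute.Pmat_left {σ : Equiv.Perm (Fin 4)} {X : Matrix (Fin 4) (Fin 4) ℂ}
    (h : Commute (Kmat σ) X) : Commute (Pmat σ) X :=
  h.sub_left (Commute.one_left X)

theorem Commute.Pmat_right {σ : Equiv.Perm (Fin 4)} {X : Matrix (Fin 4) (Fin 4) ℂ}
    (h : Commute X (Kmat σ)) : Commute X (Pmat σ) :=
  h.sub_right (Commute.one_right X)

theorem Qc12_eq : Qc12 = !![0, 0, 1, 1; 0, 0, 1, 1; 0, 0, -2, 0; 0, 0, 0, -2] := by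
  ext i j
  fin_cases i <;> fin_cases j <;> simp [Qc12, Lmat] <;> norm_num

theorem Qc34_eq : Qc34 = !![-2, 0, 0, 0; 0, -2, 0, 0; 1, 1, 0, 0; 1, 1, 0, 0] := by
  ext i j
  fin_cases i <;> fin_cases j <;> simp [Qc34, Lmat] <;> norm_num

theorem Pmat_swap_zero_one :
    Pmat (Equiv.swap 0 1) = !![-1, 1, 0, 0; 1, -1, 0, 0; 0, 0, 0, 0; 0, 0, 0, 0] := by
  ext i j
  fin_cases i <;> fin_cases j <;> simp [Pmat, Kmat, Equiv.swap_apply_def]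

theorem Pmat_swap_two_three :
    Pmat (Equiv.swap 2 3) = !![0, 0, 0, 0; 0, 0, 0, 0; 0, 0, -1, 1; 0, 0, 1, -1] := by
  ext i j
  fin_cases i <;> fin_cases j <;> simp [Pmat, Kmat, Equiv.swap_apply_def]

theorem Qc12_mul_Qc34_sub_Qc34_mul_Qc12 :
    Qc12 * Qc34 - Qc34 * Qc12 =
      (2 : ℂ) • (Qc12 - Qc34) + (2 : ℂ) • (Pmat (Equiv.swap 0 1) - Pmat (Equiv.swap 2 3)) := by
  rw [Qc12_eq, Qc34_eq, Pmat_swap_zero_one, Pmat_swap_two_three]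
  ext i j
  fin_cases i <;> fin_cases j <;> simp <;> norm_num

theorem linearIndependent_Pmat_Qc :
    LinearIndependent ℂ ![Pmat (Equiv.swap 0 1), Pmat (Equiv.swap 2 3), Qc12, Qc34] := by
  rw [Fintype.linearIndependent_iff]
  intro g hg
  -- the four matrices are, in turn, the only one with a nonzero entry at
  -- `(0,1)`, `(2,3)`, `(0,2)` and `(2,0)`
  have e01 := congrFun (congrFun hg 0) 1
  have e23 := congrFun (congrFun hg 2) 3
  have e02 := congrFun (congrFun hg 0) 2
  have e20 := congrFun (congrFun hg 2) 0
  simp [Fin.sum_univ_four, Pmat_swap_zero_one, Pmat_swap_two_three, Qc12_eq, Qc34_eq]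
    at e01 e23 e02 e20
  intro i
  fin_cases i <;> assumption

def rateMatrices : Submodule ℂ (Matrix (Fin 4) (Fin 4) ℂ) where
  carrier := LGMset
  add_mem' {A B} hA hB j := by simp [Finset.sum_add_distrib, hA j, hB j]
  zero_mem' j := by simp
  smul_mem' c A hA j := by simp [← Finset.mul_sum, hA j]

theorem Lmat_mem_rateMatrices (i j : Fin 4) : Lmat i j ∈ rateMatrices := by
  intro k
  simp [Lmat, single_apply, Finset.sum_sub_distrib, ite_and]

theorem Pmat_mem_rateMatrices (σ : Equiv.Perm (Fin 4)) : Pmat σ ∈ rateMatrices := by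
  intro k
  simp [Pmat, Kmat, one_apply, Finset.sum_sub_distrib]

theorem commutator_mem_span {R A : Type*} [CommRing R] [Ring A] [Algebra R A] {s : Set A}
    (hs : ∀ x ∈ s, ∀ y ∈ s, x * y - y * x ∈ Submodule.span R s) {x y : A}
    (hx : x ∈ Submodule.span R s) (hy : y ∈ Submodule.span R s) :
    x * y - y * x ∈ Submodule.span R s := by
  let commutator : A →ₗ[R] A →ₗ[R] A := LinearMap.mul R A - (LinearMap.mul R A).flip
  have hclosed : Submodule.map₂ commutator (Submodule.span R s) (Submodule.span R s) ≤
      Submodule.span R s := by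
    rw [Submodule.map₂_span_span, Submodule.span_le]
    rintro _ ⟨a, ha, b, hb, rfl⟩
    exact hs a ha b hb
  exact hclosed (Submodule.apply_mem_map₂ _ hx hy)

abbrev model44bGenerators : Set (Matrix (Fin 4) (Fin 4) ℂ) :=
  {Pmat (Equiv.swap 0 1), Pmat (Equiv.swap 2 3), Qc12, Qc34}

theorem commute_Pmat_of_mem_model44bGenerators {σ : Equiv.Perm (Fin 4)}
    (hσ : σ = Equiv.swap 0 1 ∨ σ = Equiv.swap 2 3) {Y : Matrix (Fin 4) (Fin 4) ℂ}
    (hY : Y ∈ model44bGenerators) : Commute (Pmat σ) Y := by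
  have hK : Commute (Kmat σ) (Kmat (Equiv.swap 0 1)) ∧
      Commute (Kmat σ) (Kmat (Equiv.swap 2 3)) := by
    have h : Commute (Equiv.swap (0 : Fin 4) 1) (Equiv.swap 2 3) :=
      (Equiv.Perm.disjoint_swap_swap (by decide)).commute
    rcases hσ with rfl | rfl
    exacts [⟨.refl _, commute_Kmat_of_commute h⟩, ⟨commute_Kmat_of_commute h.symm, .refl _⟩]
  simp only [Set.mem_insert_iff, Set.mem_singleton_iff] at hY
  rcases hY with rfl | rfl | rfl | rfl
  exacts [hK.1.Pmat_right.Pmat_left, hK.2.Pmat_right.Pmat_left,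
    (commute_Kmat_Qc12 hσ).Pmat_left, (commute_Kmat_Qc34 hσ).Pmat_left]

theorem commutator_mem_span_model44bGenerators :
    ∀ X ∈ model44bGenerators, ∀ Y ∈ model44bGenerators,
      X * Y - Y * X ∈ Submodule.span ℂ model44bGenerators := by
  have mem {X} (hX : X ∈ model44bGenerators) := Submodule.subset_span (R := ℂ) hX
  have hQ : Qc12 * Qc34 - Qc34 * Qc12 ∈ Submodule.span ℂ model44bGenerators := by
    rw [Qc12_mul_Qc34_sub_Qc34_mul_Qc12]
    exact add_mem (Submodule.smul_mem _ _ (sub_mem (mem (by simp)) (mem (by simp))))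
      (Submodule.smul_mem _ _ (sub_mem (mem (by simp)) (mem (by simp))))
  have hcomm {X Y : Matrix (Fin 4) (Fin 4) ℂ} (h : Commute X Y) :
      X * Y - Y * X ∈ Submodule.span ℂ model44bGenerators := by
    rw [sub_eq_zero.mpr h.eq]
    exact zero_mem _
  intro X hX Y hY
  obtain rfl | rfl | hXQ : X = Pmat (Equiv.swap 0 1) ∨ X = Pmat (Equiv.swap 2 3) ∨
      X = Qc12 ∨ X = Qc34 := by simpa using hX
  · exact hcomm (commute_Pmat_of_mem_model44bGenerators (.inl rfl) hY)
  · exact hcomm (commute_Pmat_of_mem_model44bGenerators (.inr rfl) hY)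
  obtain rfl | rfl | hYQ : Y = Pmat (Equiv.swap 0 1) ∨ Y = Pmat (Equiv.swap 2 3) ∨
      Y = Qc12 ∨ Y = Qc34 := by simpa using hY
  · exact hcomm (commute_Pmat_of_mem_model44bGenerators (.inl rfl) hX).symm
  · exact hcomm (commute_Pmat_of_mem_model44bGenerators (.inr rfl) hX).symm
  rcases hXQ with rfl | rfl <;> rcases hYQ with rfl | rfl
  · exact hcomm (.refl _)
  · exact hQ
  · simpa only [neg_sub] using neg_mem hQ
  · exact hcomm (.refl _)

theorem model44bGenerators_subset_rateMatrices :
    model44bGenerators ⊆ rateMatrices := by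
  have hL := Lmat_mem_rateMatrices
  have hQc12 : Qc12 ∈ rateMatrices :=
    add_mem (add_mem (add_mem (hL 0 2) (hL 0 3)) (hL 1 2)) (hL 1 3)
  have hQc34 : Qc34 ∈ rateMatrices :=
    add_mem (add_mem (add_mem (hL 2 0) (hL 2 1)) (hL 3 0)) (hL 3 1)
  rintro X (rfl | rfl | rfl | rfl)
  exacts [Pmat_mem_rateMatrices _, Pmat_mem_rateMatrices _, hQc12, hQc34]

theorem model_4_4b_lie_algebra :
    (Pmat (Equiv.swap 0 1) * Pmat (Equiv.swap 2 3) -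
      Pmat (Equiv.swap 2 3) * Pmat (Equiv.swap 0 1) = 0) ∧
    (Pmat (Equiv.swap 0 1) * Qc12 - Qc12 * Pmat (Equiv.swap 0 1) = 0) ∧
    (Pmat (Equiv.swap 0 1) * Qc34 - Qc34 * Pmat (Equiv.swap 0 1) = 0) ∧
    (Pmat (Equiv.swap 2 3) * Qc12 - Qc12 * Pmat (Equiv.swap 2 3) = 0) ∧
    (Pmat (Equiv.swap 2 3) * Qc34 - Qc34 * Pmat (Equiv.swap 2 3) = 0) ∧
    (Qc12 * Qc34 - Qc34 * Qc12 =
      (2 : ℂ) • (Qc12 - Qc34) + (2 : ℂ) • (Pmat (Equiv.swap 0 1) - Pmat (Equiv.swap 2 3))) ∧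
    LinearIndependent ℂ ![Pmat (Equiv.swap 0 1), Pmat (Equiv.swap 2 3), Qc12, Qc34] ∧
    (∀ X ∈ Submodule.span ℂ
        ({Pmat (Equiv.swap 0 1), Pmat (Equiv.swap 2 3), Qc12, Qc34} :
          Set (Matrix (Fin 4) (Fin 4) ℂ)),
      ∀ Y ∈ Submodule.span ℂ
        ({Pmat (Equiv.swap 0 1), Pmat (Equiv.swap 2 3), Qc12, Qc34} :
          Set (Matrix (Fin 4) (Fin 4) ℂ)),
        X * Y - Y * X ∈ Submodule.span ℂ
          ({Pmat (Equiv.swap 0 1), Pmat (Equiv.swap 2 3), Qc12, Qc34} :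
            Set (Matrix (Fin 4) (Fin 4) ℂ))) ∧
    ((Submodule.span ℂ
        ({Pmat (Equiv.swap 0 1), Pmat (Equiv.swap 2 3), Qc12, Qc34} :
          Set (Matrix (Fin 4) (Fin 4) ℂ)) : Set (Matrix (Fin 4) (Fin 4) ℂ)) ⊆ LGMset) := by
  have commutator_Pmat {σ} (hσ : σ = Equiv.swap 0 1 ∨ σ = Equiv.swap 2 3) {Y}
      (hY : Y ∈ model44bGenerators) : Pmat σ * Y - Y * Pmat σ = 0 :=
    sub_eq_zero.mpr (commute_Pmat_of_mem_model44bGenerators hσ hY).eq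
  refine ⟨commutator_Pmat (.inl rfl) (by simp), commutator_Pmat (.inl rfl) (by simp),
    commutator_Pmat (.inl rfl) (by simp), commutator_Pmat (.inr rfl) (by simp),
    commutator_Pmat (.inr rfl) (by simp), Qc12_mul_Qc34_sub_Qc34_mul_Qc12,
    linearIndependent_Pmat_Qc,
    fun X hX Y hY => commutator_mem_span commutator_mem_span_model44bGenerators hX hY, ?_⟩
  exact SetLike.coe_subset_coe.mpr
    (Submodule.span_le.mpr model44bGenerators_subset_rateMatrices)
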